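/- Let (R, μ) be a σ-finite nonatomic measure space and let f, g ≥ 0 be μ-measurable functions on R. Then ∫_R f g dμ ≥ ∫_0^{μ(R)} f^*(t) g_*(t) dt (reverse Hardy–Littlewood inequality). -/

import Mathlib

open MeasureTheory Set Filter Topology ENNReal

variable {α : Type*} [MeasurableSpace α]

/-- A measure is *nonatomic* if every set of positive measure contains a measurable subset
of strictly smaller, positive measure. -/
def Nonatomic (μ : Measure α) : Prop :=
  ∀ E : Set α, MeasurableSet E → 0 < μ E → ∃ F, F ⊆ E ∧ MeasurableSet F ∧ 0 < μ F ∧ μ F < μ E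

/-- The lower distribution function `κ_f(s) = μ {x : |f x| < s}`. -/
noncomputable def lowerDistrib (μ : Measure α) (f : α → ℝ) (s : ℝ) : ℝ≥0∞ :=
  μ {x | |f x| < s}

/-- The nondecreasing rearrangement `f_*(t) = sup {s > 0 : κ_f(s) < t}` (with `sup ∅ = 0`). -/
noncomputable def ndRearr (μ : Measure α) (f : α → ℝ) (t : ℝ) : ℝ≥0∞ :=
  sSup {y : ℝ≥0∞ | ∃ s : ℝ, 0 < s ∧ lowerDistrib μ f s < ENNReal.ofReal t ∧ y = ENNReal.ofReal s}

/-- The distribution function `μ_f(s) = μ {x : |f x| > s}`. -/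
noncomputable def distrib (μ : Measure α) (f : α → ℝ) (s : ℝ) : ℝ≥0∞ :=
  μ {x | s < |f x|}

/-- The nonincreasing rearrangement `f^*(t) = inf {s > 0 : μ_f(s) ≤ t}` (with `inf ∅ = ∞`). -/
noncomputable def niRearr (μ : Measure α) (f : α → ℝ) (t : ℝ) : ℝ≥0∞ :=
  sInf {y : ℝ≥0∞ | ∃ s : ℝ, 0 < s ∧ distrib μ f s ≤ ENNReal.ofReal t ∧ y = ENNReal.ofReal s}

/-!
By the two-dimensional layer-cake formula, `∫ F G` is the integral over levels `s, u > 0` of the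
measure of `{F > s, G > u}`, so it suffices to compare level sets. If `f^*(t) > s` and
`g_*(t) > u`, then `μ {|g| ≤ u} < t < μ {|f| > s}`; these `t` form an interval of length at most
`μ {|f| > s} - μ {|g| ≤ u} ≤ μ {|f| > s, |g| > u}`.
-/

section LayerCake

variable {β : Type*} [MeasurableSpace β]

theorem lintegral_eq_lintegral_meas_ofReal_lt (ν : Measure β) {h : β → ℝ≥0∞}
    (hh : AEMeasurable h ν) :
    ∫⁻ x, h x ∂ν = ∫⁻ s in Ioi 0, ν {x | ENNReal.ofReal s < h x} := by
  by_cases htop : ν {x | h x = ∞} = 0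
  · have hfin : ∀ᵐ x ∂ν, h x ≠ ∞ := measure_eq_zero_iff_ae_notMem.mp htop
    calc ∫⁻ x, h x ∂ν = ∫⁻ x, ENNReal.ofReal (h x).toReal ∂ν :=
          lintegral_congr_ae (hfin.mono fun x hx => (ENNReal.ofReal_toReal hx).symm)
      _ = ∫⁻ s in Ioi 0, ν {x | s < (h x).toReal} :=
          lintegral_eq_lintegral_meas_lt ν (ae_of_all _ fun _ => ENNReal.toReal_nonneg)
            hh.ennreal_toReal
      _ = ∫⁻ s in Ioi 0, ν {x | ENNReal.ofReal s < h x} := by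
          refine setLIntegral_congr_fun measurableSet_Ioi fun s hs => measure_congr ?_
          filter_upwards [hfin] with x hx
          exact propext (ENNReal.ofReal_lt_iff_lt_toReal (le_of_lt hs) hx).symm
  · rw [lintegral_eq_top_of_measure_eq_top_ne_zero hh htop, eq_comm, eq_top_iff]
    calc ∞ = ∫⁻ s in Ioi (0 : ℝ), ν {x | h x = ∞} := by simp [htop]
      _ ≤ ∫⁻ s in Ioi 0, ν {x | ENNReal.ofReal s < h x} :=
          lintegral_mono fun s => measure_mono fun x (hx : h x = ∞) =>
            (hx ▸ ENNReal.ofReal_lt_top : ENNReal.ofReal s < h x)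

/-- The two-dimensional layer-cake formula: `F x * G x` is the area of the quadrant
`(0, F x) × (0, G x)`. -/
theorem lintegral_mul_eq_lintegral_lintegral_meas_lt (ν : Measure β) {F G : β → ℝ≥0∞}
    (hF : Measurable F) (hG : Measurable G) :
    ∫⁻ x, F x * G x ∂ν =
      ∫⁻ s in Ioi 0, ∫⁻ u in Ioi 0,
        ν {x | ENNReal.ofReal s < F x ∧ ENNReal.ofReal u < G x} := by
  have hlevel (s : ℝ) : MeasurableSet {x | ENNReal.ofReal s < F x} :=
    measurableSet_lt measurable_const hF
  calc ∫⁻ x, F x * G x ∂ν = ∫⁻ x, F x ∂ν.withDensity G := by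
        rw [lintegral_withDensity_eq_lintegral_mul _ hG hF]
        simp only [Pi.mul_apply, mul_comm]
    _ = ∫⁻ s in Ioi 0, ∫⁻ x in {x | ENNReal.ofReal s < F x}, G x ∂ν := by
        rw [lintegral_eq_lintegral_meas_ofReal_lt _ hF.aemeasurable]
        exact lintegral_congr fun s => withDensity_apply _ (hlevel s)
    _ = _ := by
        refine lintegral_congr fun s => ?_
        rw [lintegral_eq_lintegral_meas_ofReal_lt _ hG.aemeasurable]
        refine lintegral_congr fun u => ?_
        rw [Measure.restrict_apply' (hlevel s), inter_comm]
        rfl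

end LayerCake

theorem volume_setOf_lt_ofReal_lt_le (a b : ℝ≥0∞) :
    volume {t : ℝ | a < ENNReal.ofReal t ∧ ENNReal.ofReal t < b} ≤ b - a := by
  rcases eq_or_ne a ∞ with rfl | ha
  · simp
  rcases eq_or_ne b ∞ with rfl | hb
  · simp [ha]
  calc volume {t : ℝ | a < ENNReal.ofReal t ∧ ENNReal.ofReal t < b}
      ≤ volume (Ioo a.toReal b.toReal) := by
        refine measure_mono fun t ⟨hat, htb⟩ => ?_
        have ht : 0 ≤ t := by
          by_contra! ht
          simp [ENNReal.ofReal_of_nonpos ht.le] at hat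
        exact ⟨(ENNReal.lt_ofReal_iff_toReal_lt ha).mp hat,
          (ENNReal.ofReal_lt_iff_lt_toReal ht hb).mp htb⟩
    _ = b - a := by
        rw [Real.volume_Ioo, ENNReal.ofReal_sub _ ENNReal.toReal_nonneg,
          ENNReal.ofReal_toReal hb, ENNReal.ofReal_toReal ha]

section Rearrangement

variable (μ : Measure α) (f : α → ℝ)

theorem niRearr_antitone : Antitone (niRearr μ f) := by
  intro t t' htt'
  refine sInf_le_sInf ?_
  rintro _ ⟨s, hs, hds, rfl⟩
  exact ⟨s, hs, hds.trans (ENNReal.ofReal_le_ofReal htt'), rfl⟩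

theorem ndRearr_monotone : Monotone (ndRearr μ f) := by
  intro t t' htt'
  refine sSup_le_sSup ?_
  rintro _ ⟨s, hs, hds, rfl⟩
  exact ⟨s, hs, hds.trans_le (ENNReal.ofReal_le_ofReal htt'), rfl⟩

variable {μ f}

theorem lt_distrib_of_lt_niRearr {s t : ℝ} (hs : 0 < s)
    (h : ENNReal.ofReal s < niRearr μ f t) : ENNReal.ofReal t < distrib μ f s := by
  by_contra! hle
  exact h.not_ge (sInf_le ⟨s, hs, hle, rfl⟩)

theorem measure_abs_le_lt_of_lt_ndRearr {u t : ℝ} (h : ENNReal.ofReal u < ndRearr μ f t) :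
    μ {x | |f x| ≤ u} < ENNReal.ofReal t := by
  obtain ⟨_, ⟨s, -, hκ, rfl⟩, hus⟩ := lt_sSup_iff.mp h
  have hsub : {x | |f x| ≤ u} ⊆ {x | |f x| < s} := fun x (hx : |f x| ≤ u) =>
    hx.trans_lt (ENNReal.ofReal_lt_ofReal_iff'.mp hus).1
  exact (measure_mono hsub).trans_lt hκ

/-- The level sets of `f^*` and `g_*` meet in a set of `t` squeezed between `μ {|g| ≤ u}` and
`μ {|f| > s}`, and the excess of the second over the first is carried by `{|f| > s, |g| > u}`. -/
theorem volume_lt_niRearr_lt_ndRearr_le {s u : ℝ} (hs : 0 < s) (g : α → ℝ) :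
    volume {t | ENNReal.ofReal s < niRearr μ f t ∧ ENNReal.ofReal u < ndRearr μ g t} ≤
      μ {x | s < |f x| ∧ u < |g x|} :=
  calc volume {t | ENNReal.ofReal s < niRearr μ f t ∧ ENNReal.ofReal u < ndRearr μ g t}
      ≤ volume {t : ℝ | μ {x | |g x| ≤ u} < ENNReal.ofReal t ∧
          ENNReal.ofReal t < distrib μ f s} :=
        measure_mono fun _ ⟨hft, hgt⟩ =>
          ⟨measure_abs_le_lt_of_lt_ndRearr hgt, lt_distrib_of_lt_niRearr hs hft⟩
    _ ≤ distrib μ f s - μ {x | |g x| ≤ u} := volume_setOf_lt_ofReal_lt_le _ _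
    _ ≤ μ {x | s < |f x| ∧ u < |g x|} := by
        rw [tsub_le_iff_right]
        refine (measure_mono fun x (hx : s < |f x|) => ?_).trans (measure_union_le _ _)
        exact (le_or_gt |g x| u).symm.imp (fun hgx => ⟨hx, hgx⟩) id

theorem lintegral_niRearr_mul_ndRearr_le (μ : Measure α) {f g : α → ℝ}
    (hf : Measurable f) (hg : Measurable g) :
    ∫⁻ t, niRearr μ f t * ndRearr μ g t ≤
      ∫⁻ x, ENNReal.ofReal |f x| * ENNReal.ofReal |g x| ∂μ := by
  rw [lintegral_mul_eq_lintegral_lintegral_meas_lt _ (niRearr_antitone μ f).measurable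
      (ndRearr_monotone μ g).measurable,
    lintegral_mul_eq_lintegral_lintegral_meas_lt _ hf.abs.ennreal_ofReal hg.abs.ennreal_ofReal]
  refine setLIntegral_mono' measurableSet_Ioi fun s (hs : 0 < s) =>
    setLIntegral_mono' measurableSet_Ioi fun u (hu : 0 < u) => ?_
  simp only [ENNReal.ofReal_lt_ofReal_iff_of_nonneg hs.le,
    ENNReal.ofReal_lt_ofReal_iff_of_nonneg hu.le]
  exact volume_lt_niRearr_lt_ndRearr_le hs g

end Rearrangement

theorem reverse_hardy_littlewood_general
    (μ : Measure α)
    (f g : α → ℝ) (hf : Measurable f) (hg : Measurable g)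
    (hf0 : 0 ≤ f) (hg0 : 0 ≤ g) :
    ∫⁻ t in {t : ℝ | 0 < t ∧ ENNReal.ofReal t < μ univ},
        niRearr μ f t * ndRearr μ g t ≤
      ∫⁻ x, ENNReal.ofReal (f x) * ENNReal.ofReal (g x) ∂μ :=
  calc ∫⁻ t in {t : ℝ | 0 < t ∧ ENNReal.ofReal t < μ univ}, niRearr μ f t * ndRearr μ g t
      ≤ ∫⁻ t, niRearr μ f t * ndRearr μ g t := setLIntegral_le_lintegral _ _
    _ ≤ ∫⁻ x, ENNReal.ofReal |f x| * ENNReal.ofReal |g x| ∂μ :=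
        lintegral_niRearr_mul_ndRearr_le μ hf hg
    _ = ∫⁻ x, ENNReal.ofReal (f x) * ENNReal.ofReal (g x) ∂μ := by
        simp only [abs_of_nonneg (hf0 _), abs_of_nonneg (hg0 _)]

/-- (Reverse Hardy–Littlewood inequality.) For `f, g ≥ 0`,
`∫_R f g dμ ≥ ∫_0^{μ(R)} f^*(t) g_*(t) dt`. -/
theorem reverse_hardy_littlewood
    (μ : Measure α) [SigmaFinite μ] (hμ : Nonatomic μ)
    (f g : α → ℝ) (hf : Measurable f) (hg : Measurable g)
    (hf0 : 0 ≤ f) (hg0 : 0 ≤ g) :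
    ∫⁻ t in {t : ℝ | 0 < t ∧ ENNReal.ofReal t < μ univ},
        niRearr μ f t * ndRearr μ g t ≤
      ∫⁻ x, ENNReal.ofReal (f x) * ENNReal.ofReal (g x) ∂μ :=
  reverse_hardy_littlewood_general μ f g hf hg hf0 hg0
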